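/- arXiv:1902.03491 — 7 statements merged into one kernel-verified Lean document; each statement's English description precedes it below -/
import Mathlib

section
/- If n > n₁ ≥ 2 and m > m₁ ≥ 0 are integers with F_n - F_{n₁} = 3^m - 3^{m₁}, then α^{n-4} < 3^m and 3^{m-1} ≤ α^{n-1}, where α = (1+√5)/2. Consequently 1 + (log 3 / log α)(m-1) < n < (log 3 / log α)·m + 4. -/
/-! Since `F n = F (n - 2) + F (n - 1)` and `F n₁ ≤ F (n - 1)`, the difference `F n - F n₁` lies
between `F (n - 2)` and `F n`, while `3 ^ m - 3 ^ m₁` lies between `2 * 3 ^ (m - 1)` and `3 ^ m`.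
Comparing with `φ ^ (n - 4) ≤ F (n - 2)` and `F n ≤ φ ^ (n - 1)` gives the two power inequalities;
taking logarithms gives the bounds on `n`. -/

open Real goldenRatio

namespace Nat

theorem fib_sub_two_add_fib_le_fib {m n : ℕ} (h : m < n) : fib (n - 2) + fib m ≤ fib n := by
  match n, h with
  | 1, h => simp [Nat.lt_one_iff.mp h]
  | k + 2, h =>
    rw [fib_add_two, Nat.add_sub_cancel]
    exact Nat.add_le_add_left (fib_mono (by omega)) _

end Nat

namespace Real

-- Both bounds below read off `φ ^ k = F (k + 1) - ψ * F k` with `-1 < ψ < 0`.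
theorem natCast_fib_le_goldenRatio_zpow (n : ℕ) : (Nat.fib n : ℝ) ≤ φ ^ ((n : ℤ) - 1) := by
  cases n with
  | zero => rw [Nat.fib_zero, Nat.cast_zero]; exact (zpow_pos goldenRatio_pos _).le
  | succ k =>
    rw [Nat.cast_succ, add_sub_cancel_right, zpow_natCast, ← fib_succ_sub_goldenConj_mul_fib]
    nlinarith [goldenConj_neg, (Nat.fib k).cast_nonneg (α := ℝ)]

theorem goldenRatio_zpow_le_natCast_fib {n : ℕ} (hn : n ≠ 0) :
    φ ^ ((n : ℤ) - 2) ≤ Nat.fib n := by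
  match n, hn with
  | 1, _ => simpa using (inv_lt_one_of_one_lt₀ one_lt_goldenRatio).le
  | k + 2, _ =>
    rw [Nat.cast_add, Nat.cast_ofNat, add_sub_cancel_right, zpow_natCast,
      ← fib_succ_sub_goldenConj_mul_fib, Nat.fib_add_two, Nat.cast_add]
    nlinarith [neg_one_lt_goldenConj, (Nat.fib k).cast_nonneg (α := ℝ)]

theorem pow_pred_lt_pow_sub_pow {b : ℝ} (hb : 2 < b) {m₁ m : ℕ} (h : m₁ < m) :
    b ^ (m - 1) < b ^ m - b ^ m₁ := by
  obtain ⟨k, rfl⟩ : ∃ k, m = k + 1 := ⟨m - 1, by omega⟩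
  have hle : b ^ m₁ ≤ b ^ k := pow_le_pow_right₀ (by linarith) (by omega)
  rw [Nat.add_sub_cancel, pow_succ]
  nlinarith [pow_pos (show 0 < b by linarith) k]

theorem zpow_lt_zpow_iff_lt_log_div_log_mul {a b : ℝ} (ha : 1 < a) (hb : 0 < b) (x y : ℤ) :
    a ^ x < b ^ y ↔ (x : ℝ) < log b / log a * y := by
  rw [← log_lt_log_iff (zpow_pos (by linarith) x) (zpow_pos hb y), log_zpow, log_zpow,
    div_mul_eq_mul_div, lt_div_iff₀ (log_pos ha), mul_comm (log b)]

theorem zpow_lt_zpow_iff_log_div_log_mul_lt {a b : ℝ} (ha : 1 < a) (hb : 0 < b) (x y : ℤ) :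
    b ^ y < a ^ x ↔ log b / log a * y < x := by
  rw [← log_lt_log_iff (zpow_pos hb y) (zpow_pos (by linarith) x), log_zpow, log_zpow,
    div_mul_eq_mul_div, div_lt_iff₀ (log_pos ha), mul_comm (log b)]

end Real

theorem fib_pow3_size_bounds (n n₁ m m₁ : ℕ)
    (hn₁ : 2 ≤ n₁) (hn : n₁ < n) (hm : m₁ < m)
    (heq : (Nat.fib n : ℤ) - Nat.fib n₁ = 3 ^ m - 3 ^ m₁) :
    ((1 + Real.sqrt 5) / 2) ^ ((n : ℤ) - 4) < 3 ^ m ∧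
    (3 : ℝ) ^ ((m : ℤ) - 1) ≤ ((1 + Real.sqrt 5) / 2) ^ ((n : ℤ) - 1) ∧
    1 + (Real.log 3 / Real.log ((1 + Real.sqrt 5) / 2)) * ((m : ℝ) - 1) < n ∧
    (n : ℝ) < (Real.log 3 / Real.log ((1 + Real.sqrt 5) / 2)) * m + 4 := by
  rw [← goldenRatio]
  have heqR : (Nat.fib n : ℝ) - Nat.fib n₁ = 3 ^ m - 3 ^ m₁ := by exact_mod_cast heq
  have hfib : (Nat.fib (n - 2) : ℝ) + Nat.fib n₁ ≤ Nat.fib n := by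
    exact_mod_cast Nat.fib_sub_two_add_fib_le_fib hn
  have hlow : φ ^ ((n : ℤ) - 4) < (3 : ℝ) ^ (m : ℤ) := calc
    φ ^ ((n : ℤ) - 4) = φ ^ (((n - 2 : ℕ) : ℤ) - 2) := by congr 1; omega
    _ ≤ Nat.fib (n - 2) := goldenRatio_zpow_le_natCast_fib (by omega)
    _ ≤ 3 ^ m - 3 ^ m₁ := by linarith
    _ < (3 : ℝ) ^ (m : ℤ) := by rw [zpow_natCast]; linarith [pow_pos (three_pos (α := ℝ)) m₁]
  have hup : (3 : ℝ) ^ ((m : ℤ) - 1) < φ ^ ((n : ℤ) - 1) := calc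
    (3 : ℝ) ^ ((m : ℤ) - 1) = 3 ^ (m - 1) := by rw [← zpow_natCast]; congr 1; omega
    _ < 3 ^ m - 3 ^ m₁ := pow_pred_lt_pow_sub_pow (by norm_num) hm
    _ ≤ Nat.fib n := by linarith [(Nat.fib n₁).cast_nonneg (α := ℝ)]
    _ ≤ φ ^ ((n : ℤ) - 1) := natCast_fib_le_goldenRatio_zpow n
  have hlog_low := (zpow_lt_zpow_iff_lt_log_div_log_mul one_lt_goldenRatio three_pos _ _).1 hlow
  have hlog_up := (zpow_lt_zpow_iff_log_div_log_mul_lt one_lt_goldenRatio three_pos _ _).1 hup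
  push_cast at hlog_low hlog_up
  refine ⟨by rwa [zpow_natCast] at hlow, hup.le, by linarith, by linarith⟩
end

section
/- There are no integers n > n₁ ≥ 0 and m ≥ 0 such that α^n - α^{n₁} = √5 · 3^m, where α = (1+√5)/2. -/
lemma phi_sq : ((1 + Real.sqrt 5) / 2) ^ 2 = (1 + Real.sqrt 5) / 2 + 1 := by
  have h5 : Real.sqrt 5 ^ 2 = 5 := Real.sq_sqrt (by norm_num)
  linear_combination (1/4 : ℝ) * h5

lemma phi_pow (n : ℕ) :
    ((1 + Real.sqrt 5) / 2) ^ n =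
      (Nat.fib n : ℝ) * ((1 + Real.sqrt 5) / 2)
        + (Nat.fib (n + 1) : ℝ) - (Nat.fib n : ℝ) := by
  induction n with
  | zero => simp
  | succ k ih =>
    rw [pow_succ, ih]
    have hfib : (Nat.fib (k + 2) : ℝ) = Nat.fib k + Nat.fib (k + 1) := by
      push_cast [Nat.fib_add_two]; ring
    rw [hfib]
    linear_combination (Nat.fib k : ℝ) * phi_sq

lemma sqrt5_int_eq {x y : ℤ} (h : Real.sqrt 5 * (x : ℝ) = (y : ℝ)) :
    x = 0 ∧ y = 0 := by
  have hirr : Irrational (Real.sqrt 5) := by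
    have := Nat.Prime.irrational_sqrt (p := 5) (by norm_num)
    simpa using this
  by_cases hx : x = 0
  · subst hx
    constructor
    · rfl
    · have : (y : ℝ) = 0 := by rw [← h]; simp
      exact_mod_cast this
  · exfalso
    apply hirr
    refine ⟨(y : ℚ) / (x : ℚ), ?_⟩
    have hx' : (x : ℝ) ≠ 0 := Int.cast_ne_zero.mpr hx
    push_cast
    field_simp
    linarith [h]

theorem lambda1_ne_zero :
    ¬ ∃ (n n₁ m : ℕ), n₁ < n ∧
      ((1 + Real.sqrt 5) / 2) ^ n - ((1 + Real.sqrt 5) / 2) ^ n₁ =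
        Real.sqrt 5 * 3 ^ m := by
  rintro ⟨n, n₁, m, hlt, heq⟩
  rw [phi_pow n, phi_pow n₁] at heq
  have key : Real.sqrt 5 *
      ((((Nat.fib n : ℤ) - Nat.fib n₁) - 2 * 3 ^ m : ℤ) : ℝ) =
      ((-(((Nat.fib n : ℤ) - Nat.fib n₁) +
        2 * ((Nat.fib (n + 1) : ℤ) - Nat.fib n - Nat.fib (n₁ + 1) + Nat.fib n₁)) : ℤ) : ℝ) := by
    push_cast
    linear_combination 2 * heq
  obtain ⟨h1, h2⟩ := sqrt5_int_eq key
  -- now the integer contradiction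
  have h3 : (0 : ℤ) < 3 ^ m := by positivity
  have e1 : (Nat.fib n : ℤ) - Nat.fib n₁ = 2 * 3 ^ m := by linarith
  have e2 : (Nat.fib (n + 1) : ℤ) - Nat.fib (n₁ + 1) = 3 ^ m := by linarith
  match n, hlt with
  | 1, hlt =>
    interval_cases n₁
    · simp [Nat.fib_one, Nat.fib_zero] at e1
      omega
  | (k + 2), hlt =>
    have hfib : (Nat.fib (k + 3) : ℤ) = Nat.fib (k + 1) + Nat.fib (k + 2) := by
      push_cast [Nat.fib_add_two]; ring
    have hmono : (Nat.fib (n₁ + 1) : ℤ) ≤ Nat.fib n₁ + Nat.fib (k + 1) := by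
      match n₁, hlt with
      | 0, _ =>
        have h1' : 1 ≤ Nat.fib (k + 1) := Nat.fib_pos.mpr (Nat.succ_pos k)
        show (Nat.fib 1 : ℤ) ≤ (Nat.fib 0 : ℤ) + Nat.fib (k + 1)
        simp only [Nat.fib_one, Nat.fib_zero]
        exact_mod_cast by omega
      | (j + 1), hlt =>
        have hj : j ≤ k + 1 := by omega
        have : Nat.fib (j + 2) = Nat.fib j + Nat.fib (j + 1) := Nat.fib_add_two
        have hm : Nat.fib j ≤ Nat.fib (k + 1) := Nat.fib_mono hj
        push_cast [this]
        omega
    have : (Nat.fib (k + 2) : ℤ) - Nat.fib n₁ ≤ 3 ^ m := by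
      have := e2
      rw [hfib] at this
      linarith
    rw [e1] at this
    linarith
end

section
/- There are no integers n > n₁ ≥ 0 and m > m₁ ≥ 0 such that α^n - α^{n₁} = √5 · (3^m - 3^{m₁}), where α = (1+√5)/2. -/
def luc : ℕ → ℕ
  | 0 => 2
  | 1 => 1
  | n + 2 => luc (n + 1) + luc n

lemma luc_pos : ∀ n, 0 < luc n
  | 0 => by simp [luc]
  | 1 => by simp [luc]
  | n + 2 => by
      rw [show luc (n+2) = luc (n+1) + luc n from rfl]
      exact Nat.add_pos_left (luc_pos (n+1)) _

lemma luc_succ_lt (n : ℕ) : luc (n + 1) < luc (n + 2) := by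
  rw [show luc (n+2) = luc (n+1) + luc n from rfl]
  exact Nat.lt_add_of_pos_right (luc_pos n)

lemma luc_smono : StrictMono (fun n => luc (n + 1)) :=
  strictMono_nat_of_lt_succ (fun n => luc_succ_lt n)

lemma three_le_luc : ∀ n, 2 ≤ n → 3 ≤ luc n
  | 2, _ => by simp [luc]
  | 3, _ => by simp [luc]
  | n + 4, _ => by
      rw [show luc (n+4) = luc (n+3) + luc (n+2) from rfl]
      have := three_le_luc (n+3) (by omega)
      omega

lemma luc_ne {n₁ n : ℕ} (h : n₁ < n) : luc n₁ ≠ luc n := by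
  match n₁, n, h with
  | 0, 1, _ => simp [luc]
  | 0, n + 2, _ =>
      have h3 := three_le_luc (n+2) (by omega)
      intro h
      rw [show luc 0 = 2 from rfl] at h
      omega
  | k + 1, j + 1, h =>
      exact ne_of_lt (luc_smono (by omega : k < j))

lemma alpha_pow : ∀ n : ℕ,
    ((1 + Real.sqrt 5) / 2) ^ n = ((luc n : ℝ) + (Nat.fib n : ℝ) * Real.sqrt 5) / 2
  | 0 => by simp [luc]
  | 1 => by norm_num [luc]
  | n + 2 => by
      have h5 : Real.sqrt 5 ^ 2 = 5 := Real.sq_sqrt (by norm_num)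
      have key : ((1 + Real.sqrt 5) / 2) ^ (n + 2)
          = ((1 + Real.sqrt 5) / 2) ^ (n + 1) + ((1 + Real.sqrt 5) / 2) ^ n := by
        have : ((1 + Real.sqrt 5) / 2) ^ 2 = ((1 + Real.sqrt 5) / 2) + 1 := by
          field_simp
          nlinarith [h5]
        calc ((1 + Real.sqrt 5) / 2) ^ (n + 2)
            = ((1 + Real.sqrt 5) / 2) ^ n * ((1 + Real.sqrt 5) / 2) ^ 2 := by ring
          _ = ((1 + Real.sqrt 5) / 2) ^ n * (((1 + Real.sqrt 5) / 2) + 1) := by rw [this]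
          _ = ((1 + Real.sqrt 5) / 2) ^ (n + 1) + ((1 + Real.sqrt 5) / 2) ^ n := by ring
      rw [key, alpha_pow (n + 1), alpha_pow n,
        show luc (n+2) = luc (n+1) + luc n from rfl, Nat.fib_add_two]
      push_cast
      ring

theorem lambda3_ne_zero :
    ¬ ∃ (n n₁ m m₁ : ℕ), n₁ < n ∧ m₁ < m ∧
      ((1 + Real.sqrt 5) / 2) ^ n - ((1 + Real.sqrt 5) / 2) ^ n₁ =
        Real.sqrt 5 * ((3 : ℝ) ^ m - 3 ^ m₁) := by
  rintro ⟨n, n₁, m, m₁, hn, hm, heq⟩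
  rw [alpha_pow n, alpha_pow n₁] at heq
  set A : ℚ := ((luc n : ℚ) - (luc n₁ : ℚ)) / 2 with hA
  set C : ℚ := ((3:ℚ) ^ m - 3 ^ m₁) - ((Nat.fib n : ℚ) - (Nat.fib n₁ : ℚ)) / 2 with hC
  have hmain : (A : ℝ) = Real.sqrt 5 * (C : ℝ) := by
    rw [hA, hC]
    push_cast
    linarith [heq]
  have hirr : Irrational (Real.sqrt 5) := by
    have := (Nat.Prime.irrational_sqrt (p := 5) (by norm_num))
    simpa using this
  by_cases hc : C = 0
  · rw [hc] at hmain
    simp at hmain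
    have : (luc n : ℚ) = (luc n₁ : ℚ) := by
      rw [hA] at hmain
      have : ((luc n : ℚ) - (luc n₁ : ℚ)) = 0 := by
        field_simp at hmain
        exact_mod_cast hmain
      linarith
    exact luc_ne hn (by exact_mod_cast this.symm)
  · apply hirr
    refine ⟨A / C, ?_⟩
    have hCne : (C : ℝ) ≠ 0 := by exact_mod_cast hc
    push_cast
    rw [hmain]
    field_simp
end

section
/- Suppose n > n₁ ≥ 2 and m > m₁ ≥ 0 are integers with F_n - F_{n₁} = 3^m - 3^{m₁}. Then |α^n/√5 - 3^m| < 3·max{α^{n₁}, 3^{m₁}}, where α = (1+√5)/2. -/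
theorem lambda_bound (n n₁ m m₁ : ℕ)
    (hn₁ : 2 ≤ n₁) (hn : n₁ < n) (hm : m₁ < m)
    (heq : (Nat.fib n : ℤ) - Nat.fib n₁ = 3 ^ m - 3 ^ m₁) :
    |((1 + Real.sqrt 5) / 2) ^ n / Real.sqrt 5 - 3 ^ m| <
      3 * max (((1 + Real.sqrt 5) / 2) ^ n₁) ((3 : ℝ) ^ m₁) := by
  have hs : Real.sqrt 5 ^ 2 = 5 := Real.sq_sqrt (by norm_num)
  have hs0 : 0 < Real.sqrt 5 := Real.sqrt_pos.mpr (by norm_num)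
  have hs2 : 2 < Real.sqrt 5 := by nlinarith
  have hs3 : Real.sqrt 5 < 3 := by nlinarith
  set φ : ℝ := (1 + Real.sqrt 5) / 2 with hφ
  set ψ : ℝ := (1 - Real.sqrt 5) / 2 with hψ
  have hφ1 : (3:ℝ)/2 < φ := by rw [hφ]; linarith
  have hψabs : |ψ| < 1 := by
    rw [abs_lt]; constructor <;> rw [hψ] <;> [linarith; linarith]
  have hfib : ∀ k, (Nat.fib k : ℝ) = (φ ^ k - ψ ^ k) / Real.sqrt 5 :=
    Real.coe_fib_eq
  -- equation over ℝ
  have heqR : (Nat.fib n : ℝ) - 3 ^ m = (Nat.fib n₁ : ℝ) - 3 ^ m₁ := by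
    have hZ : (Nat.fib n : ℤ) - 3 ^ m = (Nat.fib n₁ : ℤ) - 3 ^ m₁ := by linarith
    exact_mod_cast hZ
  -- key rewriting
  have hkey : φ ^ n / Real.sqrt 5 - 3 ^ m
      = ((Nat.fib n₁ : ℝ) - 3 ^ m₁) + ψ ^ n / Real.sqrt 5 := by
    have := hfib n
    field_simp at this ⊢
    nlinarith [heqR]
  set M : ℝ := max (φ ^ n₁) ((3:ℝ) ^ m₁) with hM
  have hψn : |ψ ^ n| < 1 := by
    rw [abs_pow]
    exact pow_lt_one₀ (abs_nonneg _) hψabs (by omega)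
  have hψn₁ : |ψ ^ n₁| < 1 := by
    rw [abs_pow]
    exact pow_lt_one₀ (abs_nonneg _) hψabs (by omega)
  have hφn₁ : (2:ℝ) < φ ^ n₁ := by
    calc (2:ℝ) < (3/2)^2 := by norm_num
    _ ≤ φ ^ 2 := by gcongr
    _ ≤ φ ^ n₁ := pow_le_pow_right₀ (by linarith) hn₁
  have hfibn₁ : (Nat.fib n₁ : ℝ) ≤ φ ^ n₁ := by
    rw [hfib n₁]
    rw [div_le_iff₀ hs0]
    have h1 : -ψ ^ n₁ ≤ 1 := by
      have := neg_abs_le (ψ ^ n₁); linarith [hψn₁]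
    nlinarith
  have h1m : (1:ℝ) ≤ 3 ^ m₁ := one_le_pow₀ (by norm_num)
  have hfM : φ ^ n₁ ≤ M := le_max_left _ _
  have h3M : (3:ℝ) ^ m₁ ≤ M := le_max_right _ _
  have hψterm : |ψ ^ n / Real.sqrt 5| < 1 := by
    rw [abs_div, abs_of_pos hs0, div_lt_one hs0]
    linarith
  rw [hkey]
  calc |((Nat.fib n₁ : ℝ) - 3 ^ m₁) + ψ ^ n / Real.sqrt 5|
      ≤ |(Nat.fib n₁ : ℝ) - 3 ^ m₁| + |ψ ^ n / Real.sqrt 5| := abs_add_le _ _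
    _ ≤ (Nat.fib n₁ : ℝ) + 3 ^ m₁ + |ψ ^ n / Real.sqrt 5| := by
        have hf0 : (0:ℝ) ≤ (Nat.fib n₁ : ℝ) := Nat.cast_nonneg _
        have h30 : (0:ℝ) ≤ 3 ^ m₁ := by positivity
        have : |(Nat.fib n₁ : ℝ) - 3 ^ m₁| ≤ (Nat.fib n₁ : ℝ) + 3 ^ m₁ := by
          rw [abs_le]; constructor <;> linarith
        linarith
    _ < 3 * M := by linarith
end

section
/- Suppose n > n₁ ≥ 2 and m > m₁ ≥ 0 are integers with F_n - F_{n₁} = 3^m - 3^{m₁} and n ≥ 300. Then |((α^{n-n₁} - 1)/(√5·(3^{m-m₁} - 1)))·α^{n₁}·3^{-m₁} - 1| < α^{4-n}, where α = (1+√5)/2. -/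
/-!
Write `φ, ψ = (1 ± √5)/2` and `D = √5 (3^m - 3^m₁)`. By Binet's formula the equation says
`φ^n - φ^n₁ - D = ψ^n - ψ^n₁`, so the quantity inside the absolute value is `(ψ^n - ψ^n₁) / D`.
Its numerator is at most `2` in absolute value, while `F_n - F_n₁ ≥ F_(n-2) ≥ φ^(n-4)` gives
`D ≥ √5 φ^(n-4) > 2 φ^(n-4)`.
-/

open Real goldenRatio

lemma pow_sub_sub_one_mul_pow {R : Type*} [Ring R] (x : R) {a b : ℕ} (h : b ≤ a) :
    (x ^ (a - b) - 1) * x ^ b = x ^ a - x ^ b := by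
  rw [sub_mul, one_mul, ← pow_add, Nat.sub_add_cancel h]

lemma sqrt_five_mul_fib (k : ℕ) : √5 * Nat.fib k = φ ^ k - ψ ^ k := by
  rw [coe_fib_eq]
  field_simp

lemma goldenRatio_pow_le_fib_add_two (k : ℕ) : φ ^ k ≤ Nat.fib (k + 2) := by
  have hφ := fib_succ_sub_goldenConj_mul_fib k
  rw [Nat.fib_add_two, Nat.cast_add]
  nlinarith [neg_one_lt_goldenConj, (Nat.cast_nonneg (Nat.fib k) : (0 : ℝ) ≤ Nat.fib k)]

lemma fib_sub_two_add_fib_le_fib {n₁ n : ℕ} (h : n₁ < n) :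
    Nat.fib (n - 2) + Nat.fib n₁ ≤ Nat.fib n := by
  rcases Nat.lt_or_ge n 2 with hn | hn
  · simpa [show n - 2 = 0 by omega] using Nat.fib_mono h.le
  · obtain ⟨k, rfl⟩ := Nat.exists_eq_add_of_le' hn
    rw [Nat.fib_add_two, Nat.add_sub_cancel]
    exact Nat.add_le_add_left (Nat.fib_mono (by omega)) _

lemma goldenRatio_pow_sub_four_le_fib_sub_fib {n₁ n : ℕ} (h : n₁ < n) (hn : 4 ≤ n) :
    φ ^ (n - 4) ≤ (Nat.fib n : ℝ) - Nat.fib n₁ := by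
  have hfib : ((Nat.fib (n - 2) + Nat.fib n₁ : ℕ) : ℝ) ≤ Nat.fib n :=
    Nat.cast_le.mpr (fib_sub_two_add_fib_le_fib h)
  have hφ := goldenRatio_pow_le_fib_add_two (n - 4)
  rw [show n - 4 + 2 = n - 2 by omega] at hφ
  push_cast at hfib
  linarith

lemma abs_goldenConj_pow_sub_pow_le_two (a b : ℕ) : |ψ ^ a - ψ ^ b| ≤ 2 := by
  have hψ : |ψ| ≤ 1 := abs_le.mpr ⟨neg_one_lt_goldenConj.le, goldenConj_neg.le.trans zero_le_one⟩
  calc |ψ ^ a - ψ ^ b| ≤ |ψ| ^ a + |ψ| ^ b := by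
        rw [← abs_pow, ← abs_pow]; exact abs_sub _ _
    _ ≤ 1 + 1 := add_le_add (pow_le_one₀ (abs_nonneg _) hψ) (pow_le_one₀ (abs_nonneg _) hψ)
    _ = 2 := by norm_num

lemma abs_goldenConj_pow_sub_pow_div_lt (a b : ℕ) {k : ℕ} {D : ℝ} (hD : √5 * φ ^ k ≤ D) :
    |ψ ^ a - ψ ^ b| / D < (φ ^ k)⁻¹ := by
  have hφ : 0 < φ ^ k := pow_pos goldenRatio_pos _
  have h5 : 2 < √5 := by rw [lt_sqrt] <;> norm_num
  calc |ψ ^ a - ψ ^ b| / D ≤ 2 / (√5 * φ ^ k) := by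
        gcongr
        exact abs_goldenConj_pow_sub_pow_le_two a b
    _ < 1 / φ ^ k := by
        rw [div_lt_div_iff₀ (by positivity) hφ]
        nlinarith
    _ = (φ ^ k)⁻¹ := one_div _

theorem lambda3_bound_general (n n₁ m m₁ : ℕ)
    (hn : n₁ < n) (hm : m₁ < m) (hn300 : 300 ≤ n)
    (heq : (Nat.fib n : ℤ) - Nat.fib n₁ = 3 ^ m - 3 ^ m₁) :
    |((((1 + Real.sqrt 5) / 2) ^ (n - n₁) - 1) / (Real.sqrt 5 * ((3 : ℝ) ^ (m - m₁) - 1))) *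
        ((1 + Real.sqrt 5) / 2) ^ n₁ * (3 : ℝ) ^ (-(m₁ : ℤ)) - 1| <
      ((1 + Real.sqrt 5) / 2) ^ ((4 : ℤ) - n) := by
  have heqR : (Nat.fib n : ℝ) - Nat.fib n₁ = 3 ^ m - 3 ^ m₁ := by exact_mod_cast heq
  set D := √5 * ((3 : ℝ) ^ m - 3 ^ m₁) with hD
  have hbinet : φ ^ n - φ ^ n₁ - D = ψ ^ n - ψ ^ n₁ := by
    rw [hD, ← heqR, mul_sub, sqrt_five_mul_fib, sqrt_five_mul_fib]; ring
  have hDlow : √5 * φ ^ (n - 4) ≤ D := by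
    rw [hD, ← heqR]
    exact mul_le_mul_of_nonneg_left (goldenRatio_pow_sub_four_le_fib_sub_fib hn (by omega))
      (sqrt_nonneg 5)
  have hD0 : 0 < D := lt_of_lt_of_le (by positivity) hDlow
  have hform : (φ ^ (n - n₁) - 1) / (√5 * ((3 : ℝ) ^ (m - m₁) - 1)) * φ ^ n₁ * 3 ^ (-(m₁ : ℤ)) =
      (φ ^ n - φ ^ n₁) / D := by
    rw [hD, ← pow_sub_sub_one_mul_pow φ hn.le, ← pow_sub_sub_one_mul_pow (3 : ℝ) hm.le,
      zpow_neg, zpow_natCast]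
    field_simp
  rw [hform, div_sub_one hD0.ne', hbinet, abs_div, abs_of_pos hD0,
    show (4 : ℤ) - n = -((n - 4 : ℕ) : ℤ) by omega, zpow_neg, zpow_natCast]
  exact abs_goldenConj_pow_sub_pow_div_lt n n₁ hDlow

theorem lambda3_bound (n n₁ m m₁ : ℕ)
    (hn₁ : 2 ≤ n₁) (hn : n₁ < n) (hm : m₁ < m) (hn300 : 300 ≤ n)
    (heq : (Nat.fib n : ℤ) - Nat.fib n₁ = 3 ^ m - 3 ^ m₁) :
    |((((1 + Real.sqrt 5) / 2) ^ (n - n₁) - 1) / (Real.sqrt 5 * ((3 : ℝ) ^ (m - m₁) - 1))) *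
        ((1 + Real.sqrt 5) / 2) ^ n₁ * (3 : ℝ) ^ (-(m₁ : ℤ)) - 1| <
      ((1 + Real.sqrt 5) / 2) ^ ((4 : ℤ) - n) :=
  lambda3_bound_general n n₁ m m₁ hn hm hn300 heq
end

section
/- If m ≥ 1 is an integer, T > (4m²)^m, and x is a real number with x > e and T > x/(log x)^m, then x < 2^m · T · (log T)^m. -/
theorem guzman_luca (m : ℕ) (hm : 1 ≤ m) (T x : ℝ)
    (hT : T > (4 * (m : ℝ) ^ 2) ^ m) (hx : x > Real.exp 1)
    (hTx : T > x / (Real.log x) ^ m) :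
    x < 2 ^ m * T * (Real.log T) ^ m := by
  have hm1 : (1:ℝ) ≤ m := by exact_mod_cast hm
  set u := Real.log x with hu
  set a := Real.log T with ha
  have hu1 : 1 < u := by
    rw [hu, ← Real.log_exp 1]
    exact Real.log_lt_log (Real.exp_pos 1) hx
  have hx0 : 0 < x := lt_trans (Real.exp_pos 1) hx
  have hupow : (0:ℝ) < u ^ m := pow_pos (by linarith) m
  have hxTu : x < T * u ^ m := by
    have h := (div_lt_iff₀ hupow).mp hTx
    linarith
  have h4m : (0:ℝ) < 4 * (m:ℝ)^2 := by nlinarith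
  have hT0 : (0:ℝ) < T := lt_trans (pow_pos h4m m) hT
  have hc : Real.log (4 * (m:ℝ)^2) ≤ 2 * m := by
    have h1 : (4 : ℝ) * (m:ℝ)^2 = (2*m)^2 := by ring
    have h2 : Real.log ((2*(m:ℝ))^2) = 2 * Real.log (2*m) := by
      rw [Real.log_pow]; push_cast; ring
    have h3 : Real.log (2*(m:ℝ)) = Real.log 2 + Real.log m := by
      rw [Real.log_mul (by norm_num) (by positivity)]
    have h4 : Real.log (m:ℝ) ≤ (m:ℝ) - 1 :=
      Real.log_le_sub_one_of_pos (by positivity)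
    have h5 : Real.log 2 ≤ 1 := by
      have := Real.log_two_lt_d9; linarith
    rw [h1, h2, h3]; linarith
  have halow : m * Real.log (4 * (m:ℝ)^2) < a := by
    rw [ha]
    have := Real.log_lt_log (pow_pos h4m m) hT
    rwa [Real.log_pow] at this
  have hclog : Real.log (4 * (m:ℝ)^2) > 0 := by
    have : (1:ℝ) < 4 * (m:ℝ)^2 := by nlinarith
    exact Real.log_pos this
  have ha0 : 0 < a := by nlinarith
  -- key claim : u < 2 * a
  have hu2a : u < 2 * a := by
    by_contra hcon
    push_neg at hcon
    have hlog : u < a + m * Real.log u := by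
      have h := Real.log_lt_log hx0 hxTu
      rwa [Real.log_mul (ne_of_gt hT0) (ne_of_gt hupow), Real.log_pow, ← ha, ← hu] at h
    set c := Real.log (4 * (m:ℝ)^2) with hcdef
    set v := u / (2 * m) with hv
    have hm0 : (0:ℝ) < 2 * m := by linarith
    have hvc : c < v := by
      rw [hv, lt_div_iff₀ hm0]
      nlinarith
    have huv : u = 2 * m * v := by
      rw [hv]; field_simp
    -- u < 2 * m * log u
    have h2mlog : u < 2 * m * Real.log u := by nlinarith
    have hvltlogu : v < Real.log u := by
      rw [hv, div_lt_iff₀ hm0]; linarith [h2mlog]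
    have hexpv : Real.exp v < u := by
      calc Real.exp v < Real.exp (Real.log u) := Real.exp_lt_exp.mpr hvltlogu
        _ = u := Real.exp_log (by linarith)
    have hexplow : 4 * (m:ℝ)^2 * (v - c + 1) ≤ Real.exp v := by
      have h1 : v - c + 1 ≤ Real.exp (v - c) := Real.add_one_le_exp _
      have h2 : Real.exp v = Real.exp c * Real.exp (v - c) := by
        rw [← Real.exp_add]; ring_nf
      have h3 : Real.exp c = 4 * (m:ℝ)^2 := Real.exp_log h4m
      rw [h2, h3]
      nlinarith [Real.exp_pos (v - c)]
    nlinarith [hexpv, hexplow, hvc, hc, hm1, huv]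
  -- conclude
  have hpow : u ^ m < (2 * a) ^ m :=
    pow_lt_pow_left₀ hu2a (by linarith) (by omega)
  calc x < T * u ^ m := hxTu
    _ < T * (2 * a) ^ m := by
        exact (mul_lt_mul_iff_right₀ hT0).mpr hpow
    _ = 2 ^ m * T * a ^ m := by rw [mul_pow]; ring
end

section
/- If n > n₁ ≥ 2 and m > m₁ ≥ 0 are integers with F_n - F_{n₁} = 3^m - 3^{m₁}, then 2m < n. -/
lemma fib_two_mul_add_two_le (k : ℕ) : Nat.fib (2 * k + 2) ≤ 3 ^ k := by
  induction k with
  | zero => simp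
  | succ k ih =>
    have h1 : 2 * (k + 1) + 2 = (2 * k + 2) + 2 := by ring
    have e1 : Nat.fib (2*k+2+2) = Nat.fib (2*k+2) + Nat.fib (2*k+2+1) := Nat.fib_add_two
    have e2 : Nat.fib (2*k+1+2) = Nat.fib (2*k+1) + Nat.fib (2*k+1+1) := Nat.fib_add_two
    have e3 : Nat.fib (2*k+1) ≤ Nat.fib (2*k+2) := Nat.fib_mono (by omega)
    have : Nat.fib (2*(k+1)+2) = Nat.fib (2*k+4) := by norm_num; ring_nf
    rw [this]
    have : Nat.fib (2*k+4) ≤ 3 * Nat.fib (2*k+2) := by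
      ring_nf at e1 e2 e3 ⊢; omega
    calc Nat.fib (2*k+4) ≤ 3 * Nat.fib (2*k+2) := this
      _ ≤ 3 * 3 ^ k := by omega
      _ = 3 ^ (k+1) := by ring

theorem two_m_lt_n (n n₁ m m₁ : ℕ)
    (hn₁ : 2 ≤ n₁) (hn : n₁ < n) (hm : m₁ < m)
    (heq : (Nat.fib n : ℤ) - Nat.fib n₁ = 3 ^ m - 3 ^ m₁) :
    2 * m < n := by
  by_contra h
  push_neg at h
  -- n ≤ 2 * m, m ≥ 1
  have hm1 : 1 ≤ m := by omega
  have hfn : Nat.fib n ≤ Nat.fib (2 * (m - 1) + 2) := Nat.fib_mono (by omega)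
  have hb : Nat.fib n ≤ 3 ^ (m - 1) := hfn.trans (fib_two_mul_add_two_le (m - 1))
  -- lower bound from heq
  have h3 : (3 : ℤ) ^ m₁ ≤ 3 ^ (m - 1) := by
    apply pow_le_pow_right₀ (by norm_num) (by omega)
  have hmm : (3 : ℤ) ^ m = 3 * 3 ^ (m - 1) := by
    rw [← pow_succ']; congr 1; omega
  have hlow : (2 : ℤ) * 3 ^ (m - 1) ≤ (Nat.fib n : ℤ) := by
    have : (Nat.fib n₁ : ℤ) ≥ 0 := Int.natCast_nonneg _
    nlinarith [heq]
  have hup : ((Nat.fib n : ℤ)) ≤ (3 : ℤ) ^ (m - 1) := by exact_mod_cast hb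
  have hpos : (0 : ℤ) < 3 ^ (m - 1) := by positivity
  linarith
end
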